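/- The partition function of the hard square model at activity −1 on the cylinder of circumference 6 is periodic in m with period 12: for every m ≥ 1, Z(C_{m+12,6}) = Z(C_{m,6}), and for m ≡ 1, 2, 3, 4, 5, 6, 7, 8, 9, 10, 11, 0 (mod 12) the value of Z(C_{m,6}) is respectively 2, −1, 1, 4, −1, −1, 4, 1, −1, 2, 1, 1. -/
import Mathlib


/-- Adjacency in the cylinder graph: vertices are pairs (row, column) with
rows in {1,…,m} (enforced separately) and columns in ℤ/nℤ.  Two distinct
vertices are adjacent iff they are in the same row and their columns differ
by ±1 in ℤ/nℤ, or they are in the same column and their rows differ by 1. -/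
def cylAdj (n : ℕ) (v w : ℕ × ZMod n) : Prop :=
  v ≠ w ∧ ((v.1 = w.1 ∧ (w.2 = v.2 + 1 ∨ v.2 = w.2 + 1)) ∨
    (v.2 = w.2 ∧ (v.1 + 1 = w.1 ∨ w.1 + 1 = v.1)))

/-- `σ` is an independent set of the cylinder graph `C_{m,n}`:
its vertices lie in {1,…,m} × ℤ/nℤ and no two of them are adjacent. -/
def cylIndep (m n : ℕ) (σ : Finset (ℕ × ZMod n)) : Prop :=
  (∀ v ∈ σ, 1 ≤ v.1 ∧ v.1 ≤ m) ∧ ∀ v ∈ σ, ∀ w ∈ σ, ¬ cylAdj n v w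

/-- Partition function of the hard square model at activity −1 on `C_{m,n}`:
`Z(C_{m,n}) = Σ_σ (−1)^{|σ|}` over all independent sets `σ`. -/
noncomputable def Zcyl (m n : ℕ) : ℤ :=
  ∑ᶠ σ ∈ {σ : Finset (ℕ × ZMod n) | cylIndep m n σ}, (-1 : ℤ) ^ σ.card

open Finset

abbrev V6 := ZMod 6

instance (n : ℕ) (v w : ℕ × ZMod n) : Decidable (cylAdj n v w) := by
  unfold cylAdj; infer_instance

instance (m n : ℕ) (σ : Finset (ℕ × ZMod n)) : Decidable (cylIndep m n σ) := by
  unfold cylIndep; infer_instance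

def T6 (m : ℕ) : Finset (Finset (ℕ × V6)) :=
  ((Finset.Icc 1 m ×ˢ (univ : Finset V6)).powerset).filter (fun σ => cylIndep m 6 σ)

lemma mem_T6 {m : ℕ} {σ : Finset (ℕ × V6)} : σ ∈ T6 m ↔ cylIndep m 6 σ := by
  simp only [T6, mem_filter, mem_powerset, and_iff_right_iff_imp]
  intro h v hv
  exact Finset.mem_product.2 ⟨Finset.mem_Icc.2 (h.1 v hv), mem_univ _⟩

lemma Zcyl_eq_sum (m : ℕ) : Zcyl m 6 = ∑ σ ∈ T6 m, (-1 : ℤ) ^ σ.card := by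
  rw [Zcyl, show {σ : Finset (ℕ × V6) | cylIndep m 6 σ} = ↑(T6 m) from
    Set.ext fun σ => by simp [mem_T6]]
  exact finsum_mem_coe_finset _ _

def topRow (i : ℕ) (σ : Finset (ℕ × V6)) : Finset V6 :=
  (σ.filter (fun v => v.1 = i)).image Prod.snd

lemma mem_topRow {i : ℕ} {a : V6} {σ : Finset (ℕ × V6)} :
    a ∈ topRow i σ ↔ (i, a) ∈ σ := by
  simp only [topRow, mem_image, mem_filter]
  constructor
  · rintro ⟨⟨x, y⟩, ⟨hm, h1⟩, h2⟩
    simp only at h1 h2; subst h1; subst h2; exact hm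
  · intro h; exact ⟨(i, a), ⟨h, rfl⟩, rfl⟩

def W (m : ℕ) (s : Finset V6) : ℤ :=
  ∑ σ ∈ (T6 m).filter (fun σ => topRow m σ = s), (-1 : ℤ) ^ σ.card

lemma Zcyl_eq_W (m : ℕ) : Zcyl m 6 = ∑ s : Finset V6, W m s := by
  rw [Zcyl_eq_sum, ← Finset.sum_fiberwise (T6 m) (fun σ => topRow m σ)]
  rfl

def stepF (f : Finset V6 → ℤ) (s : Finset V6) : ℤ :=
  if ∀ a ∈ s, a + 1 ∉ s then
    (-1 : ℤ) ^ s.card * ∑ t ∈ univ.filter (fun t => Disjoint s t), f t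
  else 0

def vec : ℕ → Finset V6 → ℤ
  | 0 => fun s => if s = ∅ then 1 else 0
  | m + 1 => stepF (vec m)

lemma zsucc_ne : ∀ a : V6, a ≠ a + 1 := by decide

lemma cylAdj_symm {n : ℕ} {v w : ℕ × ZMod n} (h : cylAdj n v w) : cylAdj n w v := by
  unfold cylAdj at *; tauto

lemma W_succ (m : ℕ) (s : Finset V6) : W (m + 1) s = stepF (W m) s := by
  unfold stepF
  by_cases hs : ∀ a ∈ s, a + 1 ∉ s
  · rw [if_pos hs]
    have hfib : ∑ t ∈ univ.filter (fun t => Disjoint s t), W m t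
        = ∑ σ ∈ (T6 m).filter (fun σ => Disjoint s (topRow m σ)), (-1 : ℤ) ^ σ.card := by
      unfold W
      rw [Finset.sum_fiberwise_eq_sum_filter]
      apply Finset.sum_congr _ (fun _ _ => rfl)
      apply Finset.filter_congr
      intro σ _
      simp
    rw [hfib, Finset.mul_sum]
    apply Finset.sum_nbij' (i := fun σ => σ.filter (fun v => v.1 ≤ m))
      (j := fun σ' => σ' ∪ ({m + 1} ×ˢ s))
    · -- hi : down σ lands in target
      intro σ hσ
      rw [mem_filter] at hσ ⊢
      obtain ⟨hT, htop⟩ := hσ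
      rw [mem_T6] at hT ⊢
      refine ⟨⟨fun v hv => ?_, fun v hv w hw => hT.2 v (mem_filter.1 hv).1 w (mem_filter.1 hw).1⟩, ?_⟩
      · rw [mem_filter] at hv
        exact ⟨(hT.1 v hv.1).1, hv.2⟩
      · rw [Finset.disjoint_left]
        intro a ha hconj
        rw [mem_topRow, mem_filter] at hconj
        have h1 : ((m + 1 : ℕ), a) ∈ σ := mem_topRow.1 (htop ▸ ha)
        exact hT.2 _ hconj.1 _ h1
          ⟨by simp, Or.inr ⟨rfl, Or.inl rfl⟩⟩
    · -- hj : up σ' lands in source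
      intro σ' hσ'
      rw [mem_filter] at hσ' ⊢
      obtain ⟨hT, hdisj⟩ := hσ'
      rw [mem_T6] at hT
      have htopu : topRow (m + 1) (σ' ∪ {m + 1} ×ˢ s) = s := by
        ext a
        rw [mem_topRow, Finset.mem_union, Finset.mem_product, Finset.mem_singleton]
        constructor
        · rintro (h | h)
          · exact absurd (hT.1 _ h).2 (by omega)
          · exact h.2
        · intro h; exact Or.inr ⟨rfl, h⟩
      refine ⟨mem_T6.2 ⟨fun v hv => ?_, fun v hv w hw hadj => ?_⟩, htopu⟩
      · rw [Finset.mem_union, Finset.mem_product, Finset.mem_singleton] at hv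
        rcases hv with h | h
        · have := hT.1 v h; omega
        · omega
      · -- independence of the union
        rw [Finset.mem_union, Finset.mem_product, Finset.mem_singleton] at hv hw
        have key : ∀ v w : ℕ × V6, v ∈ σ' → (w.1 = m + 1 ∧ w.2 ∈ s) → ¬ cylAdj 6 v w := by
          rintro v w hv' ⟨hw1, hw2⟩ hadj
          have hvb := hT.1 v hv'
          rcases hadj.2 with ⟨h1, _⟩ | ⟨h1, h2⟩
          · omega
          · rcases h2 with h2 | h2
            · have hvm : v.1 = m := by omega
              have : (m, w.2) ∈ σ' := by
                have : v = (m, w.2) := Prod.ext hvm h1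
                rwa [this] at hv'
              exact Finset.disjoint_right.1 hdisj (mem_topRow.2 this) hw2
            · omega
        rcases hv with hv | hv <;> rcases hw with hw | hw
        · exact hT.2 v hv w hw hadj
        · exact key v w hv hw hadj
        · exact key w v hw hv (cylAdj_symm hadj)
        · -- both in the new top row
          rcases hadj.2 with ⟨h1, h2⟩ | ⟨h1, h2⟩
          · rcases h2 with h2 | h2
            · exact hs v.2 hv.2 (h2 ▸ hw.2)
            · exact hs w.2 hw.2 (h2 ▸ hv.2)
          · omega
    · -- left inverse
      intro σ hσ
      rw [mem_filter] at hσ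
      obtain ⟨hT, htop⟩ := hσ
      rw [mem_T6] at hT
      have htopeq : {m + 1} ×ˢ s = σ.filter (fun v => v.1 = m + 1) := by
        ext ⟨i, a⟩
        rw [Finset.mem_product, Finset.mem_singleton, mem_filter]
        constructor
        · rintro ⟨rfl, ha⟩
          exact ⟨mem_topRow.1 (htop ▸ ha), rfl⟩
        · rintro ⟨hmem, rfl⟩
          exact ⟨rfl, htop ▸ mem_topRow.2 hmem⟩
      rw [htopeq, ← Finset.filter_or]
      apply Finset.filter_true_of_mem
      intro v hv
      have := hT.1 v hv
      omega
    · -- right inverse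
      intro σ' hσ'
      rw [mem_filter] at hσ'
      have hb := (mem_T6.1 hσ'.1).1
      rw [Finset.filter_union]
      have h1 : σ'.filter (fun v => v.1 ≤ m) = σ' :=
        Finset.filter_true_of_mem fun v hv => (hb v hv).2
      have h2 : ({m + 1} ×ˢ s).filter (fun v : ℕ × V6 => v.1 ≤ m) = ∅ := by
        apply Finset.filter_false_of_mem
        intro v hv
        rw [Finset.mem_product, Finset.mem_singleton] at hv
        omega
      rw [h1, h2, Finset.union_empty]
    · -- summand equality
      intro σ hσ
      rw [mem_filter] at hσ
      obtain ⟨hT, htop⟩ := hσ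
      rw [mem_T6] at hT
      have htopeq : {m + 1} ×ˢ s = σ.filter (fun v => v.1 = m + 1) := by
        ext ⟨i, a⟩
        rw [Finset.mem_product, Finset.mem_singleton, mem_filter]
        constructor
        · rintro ⟨rfl, ha⟩
          exact ⟨mem_topRow.1 (htop ▸ ha), rfl⟩
        · rintro ⟨hmem, rfl⟩
          exact ⟨rfl, htop ▸ mem_topRow.2 hmem⟩
      have hdecomp : σ = σ.filter (fun v => v.1 ≤ m) ∪ {m + 1} ×ˢ s := by
        rw [htopeq, ← Finset.filter_or]
        symm
        apply Finset.filter_true_of_mem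
        intro v hv
        have := hT.1 v hv
        omega
      have hdisj : Disjoint (σ.filter (fun v : ℕ × V6 => v.1 ≤ m)) ({m + 1} ×ˢ s) := by
        rw [Finset.disjoint_left]
        intro v hv hv2
        rw [mem_filter] at hv
        rw [Finset.mem_product, Finset.mem_singleton] at hv2
        omega
      have hcard : σ.card = (σ.filter (fun v => v.1 ≤ m)).card + s.card := by
        conv_lhs => rw [hdecomp]
        rw [Finset.card_union_of_disjoint hdisj, Finset.card_product,
          Finset.card_singleton, one_mul]
      rw [hcard, pow_add, mul_comm]
  · rw [if_neg hs]
    unfold W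
    convert Finset.sum_empty
    rw [Finset.filter_eq_empty_iff]
    intro σ hσ htop
    push_neg at hs
    obtain ⟨a, ha, ha'⟩ := hs
    have h1 : ((m + 1 : ℕ), a) ∈ σ := mem_topRow.1 (htop ▸ ha)
    have h2 : ((m + 1 : ℕ), a + 1) ∈ σ := mem_topRow.1 (htop ▸ ha')
    exact (mem_T6.1 hσ).2 _ h1 _ h2
      ⟨fun h => zsucc_ne a (congrArg Prod.snd h), Or.inl ⟨rfl, Or.inl rfl⟩⟩

lemma W_eq_vec : ∀ m, W m = vec m := by
  intro m
  induction m with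
  | zero =>
    have hT0 : T6 0 = {∅} := by
      ext σ
      rw [mem_T6, Finset.mem_singleton]
      constructor
      · intro h
        ext v
        simp only [Finset.notMem_empty, iff_false]
        intro hv
        have := h.1 v hv
        omega
      · rintro rfl
        exact ⟨fun v hv => absurd hv (Finset.notMem_empty v),
          fun v hv => absurd hv (Finset.notMem_empty v)⟩
    funext s
    show W 0 s = vec 0 s
    rw [W, hT0]
    have htr : topRow 0 (∅ : Finset (ℕ × V6)) = ∅ := by simp [topRow]
    by_cases h : s = ∅
    · subst h
      rw [Finset.filter_singleton, if_pos htr, Finset.sum_singleton]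
      simp [vec]
    · rw [Finset.filter_singleton, if_neg (htr ▸ fun hh => h hh.symm), Finset.sum_empty]
      simp [vec, h]
  | succ m ih =>
    funext s
    rw [show vec (m + 1) = stepF (vec m) from rfl, W_succ, ih]

lemma Zcyl_eq_vec (m : ℕ) : Zcyl m 6 = ∑ s : Finset V6, vec m s := by
  rw [Zcyl_eq_W, W_eq_vec]
def tbl (L : List ℤ) (s : Finset V6) : ℤ := L.getD (∑ i ∈ s, 2 ^ i.val) 0
def L0 : List ℤ := [1,0,0,0,0,0,0,0,0,0,0,0,0,0,0,0,0,0,0,0,0,0,0,0,0,0,0,0,0,0,0,0,0,0,0,0,0,0,0,0,0,0,0,0,0,0,0,0,0,0,0,0,0,0,0,0,0,0,0,0,0,0,0,0]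
def L1 : List ℤ := [1,-1,-1,0,-1,1,0,0,-1,1,1,0,0,0,0,0,-1,1,1,0,1,-1,0,0,0,0,0,0,0,0,0,0,-1,0,1,0,1,0,0,0,1,0,-1,0,0,0,0,0,0,0,0,0,0,0,0,0,0,0,0,0,0,0,0,0]
def L2 : List ℤ := [2,-1,-1,0,-1,0,0,0,-1,1,0,0,0,0,0,0,-1,0,1,0,0,0,0,0,0,0,0,0,0,0,0,0,-1,0,0,0,1,0,0,0,0,0,0,0,0,0,0,0,0,0,0,0,0,0,0,0,0,0,0,0,0,0,0,0]
def L3 : List ℤ := [-1,1,1,0,1,-1,0,0,1,0,-1,0,0,0,0,0,1,-1,0,0,-1,1,0,0,0,0,0,0,0,0,0,0,1,0,-1,0,0,0,0,0,-1,0,1,0,0,0,0,0,0,0,0,0,0,0,0,0,0,0,0,0,0,0,0,0]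
def L4 : List ℤ := [1,-1,-1,0,-1,1,0,0,-1,1,1,0,0,0,0,0,-1,1,1,0,1,0,0,0,0,0,0,0,0,0,0,0,-1,0,1,0,1,0,0,0,1,0,0,0,0,0,0,0,0,0,0,0,0,0,0,0,0,0,0,0,0,0,0,0]
def L5 : List ℤ := [4,-2,-2,0,-2,1,0,0,-2,1,1,0,0,0,0,0,-2,1,1,0,1,-1,0,0,0,0,0,0,0,0,0,0,-2,0,1,0,1,0,0,0,1,0,-1,0,0,0,0,0,0,0,0,0,0,0,0,0,0,0,0,0,0,0,0,0]
def L6 : List ℤ := [-1,1,1,0,1,-1,0,0,1,0,-1,0,0,0,0,0,1,-1,0,0,-1,0,0,0,0,0,0,0,0,0,0,0,1,0,-1,0,0,0,0,0,-1,0,0,0,0,0,0,0,0,0,0,0,0,0,0,0,0,0,0,0,0,0,0,0]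
def L7 : List ℤ := [-1,0,0,0,0,0,0,0,0,1,0,0,0,0,0,0,0,0,1,0,0,1,0,0,0,0,0,0,0,0,0,0,0,0,0,0,1,0,0,0,0,0,1,0,0,0,0,0,0,0,0,0,0,0,0,0,0,0,0,0,0,0,0,0]
def L8 : List ℤ := [4,-2,-2,0,-2,1,0,0,-2,1,1,0,0,0,0,0,-2,1,1,0,1,0,0,0,0,0,0,0,0,0,0,0,-2,0,1,0,1,0,0,0,1,0,0,0,0,0,0,0,0,0,0,0,0,0,0,0,0,0,0,0,0,0,0,0]
def L9 : List ℤ := [1,0,0,0,0,0,0,0,0,0,0,0,0,0,0,0,0,0,0,0,0,-1,0,0,0,0,0,0,0,0,0,0,0,0,0,0,0,0,0,0,0,0,-1,0,0,0,0,0,0,0,0,0,0,0,0,0,0,0,0,0,0,0,0,0]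
def L10 : List ℤ := [-1,0,0,0,0,0,0,0,0,1,0,0,0,0,0,0,0,0,1,0,0,0,0,0,0,0,0,0,0,0,0,0,0,0,0,0,1,0,0,0,0,0,0,0,0,0,0,0,0,0,0,0,0,0,0,0,0,0,0,0,0,0,0,0]
def L11 : List ℤ := [2,-1,-1,0,-1,0,0,0,-1,1,0,0,0,0,0,0,-1,0,1,0,0,1,0,0,0,0,0,0,0,0,0,0,-1,0,0,0,1,0,0,0,0,0,1,0,0,0,0,0,0,0,0,0,0,0,0,0,0,0,0,0,0,0,0,0]
def L12 : List ℤ := [1,0,0,0,0,0,0,0,0,0,0,0,0,0,0,0,0,0,0,0,0,0,0,0,0,0,0,0,0,0,0,0,0,0,0,0,0,0,0,0,0,0,0,0,0,0,0,0,0,0,0,0,0,0,0,0,0,0,0,0,0,0,0,0]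
set_option maxRecDepth 100000
set_option maxHeartbeats 2000000
lemma e0 : ∀ s : Finset V6, vec 0 s = tbl L0 s := by decide
lemma d1 : ∀ s : Finset V6, stepF (tbl L0) s = tbl L1 s := by decide
lemma e1 : ∀ s : Finset V6, vec 1 s = tbl L1 s := by
  intro s
  show stepF (vec 0) s = _
  rw [show vec 0 = tbl L0 from funext e0]
  exact d1 s
lemma d2 : ∀ s : Finset V6, stepF (tbl L1) s = tbl L2 s := by decide
lemma e2 : ∀ s : Finset V6, vec 2 s = tbl L2 s := by
  intro s
  show stepF (vec 1) s = _
  rw [show vec 1 = tbl L1 from funext e1]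
  exact d2 s
lemma d3 : ∀ s : Finset V6, stepF (tbl L2) s = tbl L3 s := by decide
lemma e3 : ∀ s : Finset V6, vec 3 s = tbl L3 s := by
  intro s
  show stepF (vec 2) s = _
  rw [show vec 2 = tbl L2 from funext e2]
  exact d3 s
lemma d4 : ∀ s : Finset V6, stepF (tbl L3) s = tbl L4 s := by decide
lemma e4 : ∀ s : Finset V6, vec 4 s = tbl L4 s := by
  intro s
  show stepF (vec 3) s = _
  rw [show vec 3 = tbl L3 from funext e3]
  exact d4 s
lemma d5 : ∀ s : Finset V6, stepF (tbl L4) s = tbl L5 s := by decide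
lemma e5 : ∀ s : Finset V6, vec 5 s = tbl L5 s := by
  intro s
  show stepF (vec 4) s = _
  rw [show vec 4 = tbl L4 from funext e4]
  exact d5 s
lemma d6 : ∀ s : Finset V6, stepF (tbl L5) s = tbl L6 s := by decide
lemma e6 : ∀ s : Finset V6, vec 6 s = tbl L6 s := by
  intro s
  show stepF (vec 5) s = _
  rw [show vec 5 = tbl L5 from funext e5]
  exact d6 s
lemma d7 : ∀ s : Finset V6, stepF (tbl L6) s = tbl L7 s := by decide
lemma e7 : ∀ s : Finset V6, vec 7 s = tbl L7 s := by
  intro s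
  show stepF (vec 6) s = _
  rw [show vec 6 = tbl L6 from funext e6]
  exact d7 s
lemma d8 : ∀ s : Finset V6, stepF (tbl L7) s = tbl L8 s := by decide
lemma e8 : ∀ s : Finset V6, vec 8 s = tbl L8 s := by
  intro s
  show stepF (vec 7) s = _
  rw [show vec 7 = tbl L7 from funext e7]
  exact d8 s
lemma d9 : ∀ s : Finset V6, stepF (tbl L8) s = tbl L9 s := by decide
lemma e9 : ∀ s : Finset V6, vec 9 s = tbl L9 s := by
  intro s
  show stepF (vec 8) s = _
  rw [show vec 8 = tbl L8 from funext e8]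
  exact d9 s
lemma d10 : ∀ s : Finset V6, stepF (tbl L9) s = tbl L10 s := by decide
lemma e10 : ∀ s : Finset V6, vec 10 s = tbl L10 s := by
  intro s
  show stepF (vec 9) s = _
  rw [show vec 9 = tbl L9 from funext e9]
  exact d10 s
lemma d11 : ∀ s : Finset V6, stepF (tbl L10) s = tbl L11 s := by decide
lemma e11 : ∀ s : Finset V6, vec 11 s = tbl L11 s := by
  intro s
  show stepF (vec 10) s = _
  rw [show vec 10 = tbl L10 from funext e10]
  exact d11 s
lemma d12 : ∀ s : Finset V6, stepF (tbl L11) s = tbl L12 s := by decide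
lemma e12 : ∀ s : Finset V6, vec 12 s = tbl L12 s := by
  intro s
  show stepF (vec 11) s = _
  rw [show vec 11 = tbl L11 from funext e11]
  exact d12 s
lemma d13 : ∀ s : Finset V6, stepF (tbl L12) s = tbl L1 s := by decide
lemma e13 : ∀ s : Finset V6, vec 13 s = tbl L1 s := by
  intro s
  show stepF (vec 12) s = _
  rw [show vec 12 = tbl L12 from funext e12]
  exact d13 s
lemma sv1 : ∑ s : Finset V6, tbl L1 s = (2 : ℤ) := by decide
lemma z1 : ∑ s : Finset V6, vec 1 s = (2 : ℤ) := by
  rw [Finset.sum_congr rfl fun s _ => e1 s]; exact sv1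
lemma sv2 : ∑ s : Finset V6, tbl L2 s = (-1 : ℤ) := by decide
lemma z2 : ∑ s : Finset V6, vec 2 s = (-1 : ℤ) := by
  rw [Finset.sum_congr rfl fun s _ => e2 s]; exact sv2
lemma sv3 : ∑ s : Finset V6, tbl L3 s = (1 : ℤ) := by decide
lemma z3 : ∑ s : Finset V6, vec 3 s = (1 : ℤ) := by
  rw [Finset.sum_congr rfl fun s _ => e3 s]; exact sv3
lemma sv4 : ∑ s : Finset V6, tbl L4 s = (4 : ℤ) := by decide
lemma z4 : ∑ s : Finset V6, vec 4 s = (4 : ℤ) := by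
  rw [Finset.sum_congr rfl fun s _ => e4 s]; exact sv4
lemma sv5 : ∑ s : Finset V6, tbl L5 s = (-1 : ℤ) := by decide
lemma z5 : ∑ s : Finset V6, vec 5 s = (-1 : ℤ) := by
  rw [Finset.sum_congr rfl fun s _ => e5 s]; exact sv5
lemma sv6 : ∑ s : Finset V6, tbl L6 s = (-1 : ℤ) := by decide
lemma z6 : ∑ s : Finset V6, vec 6 s = (-1 : ℤ) := by
  rw [Finset.sum_congr rfl fun s _ => e6 s]; exact sv6
lemma sv7 : ∑ s : Finset V6, tbl L7 s = (4 : ℤ) := by decide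
lemma z7 : ∑ s : Finset V6, vec 7 s = (4 : ℤ) := by
  rw [Finset.sum_congr rfl fun s _ => e7 s]; exact sv7
lemma sv8 : ∑ s : Finset V6, tbl L8 s = (1 : ℤ) := by decide
lemma z8 : ∑ s : Finset V6, vec 8 s = (1 : ℤ) := by
  rw [Finset.sum_congr rfl fun s _ => e8 s]; exact sv8
lemma sv9 : ∑ s : Finset V6, tbl L9 s = (-1 : ℤ) := by decide
lemma z9 : ∑ s : Finset V6, vec 9 s = (-1 : ℤ) := by
  rw [Finset.sum_congr rfl fun s _ => e9 s]; exact sv9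
lemma sv10 : ∑ s : Finset V6, tbl L10 s = (2 : ℤ) := by decide
lemma z10 : ∑ s : Finset V6, vec 10 s = (2 : ℤ) := by
  rw [Finset.sum_congr rfl fun s _ => e10 s]; exact sv10
lemma sv11 : ∑ s : Finset V6, tbl L11 s = (1 : ℤ) := by decide
lemma z11 : ∑ s : Finset V6, vec 11 s = (1 : ℤ) := by
  rw [Finset.sum_congr rfl fun s _ => e11 s]; exact sv11
lemma sv12 : ∑ s : Finset V6, tbl L12 s = (1 : ℤ) := by decide
lemma z12 : ∑ s : Finset V6, vec 12 s = (1 : ℤ) := by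
  rw [Finset.sum_congr rfl fun s _ => e12 s]; exact sv12

lemma vec13_eq : vec 13 = vec 1 :=
  funext fun s => (e13 s).trans (e1 s).symm

lemma vec_aux : ∀ k : ℕ, vec (k + 13) = vec (k + 1) := by
  intro k
  induction k with
  | zero => exact vec13_eq
  | succ k ih =>
    rw [show k + 1 + 13 = (k + 13) + 1 from by omega]
    show stepF (vec (k + 13)) = stepF (vec (k + 1))
    rw [ih]

lemma vec_add12 (m : ℕ) (hm : 1 ≤ m) : vec (m + 12) = vec m := by
  obtain ⟨k, rfl⟩ := Nat.exists_eq_add_of_le hm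
  rw [show 1 + k + 12 = k + 13 from by omega, vec_aux, Nat.add_comm]

lemma vec_rep : ∀ (k r : ℕ), 1 ≤ r → vec (r + 12 * k) = vec r := by
  intro k
  induction k with
  | zero => intro r _; rfl
  | succ k ih =>
    intro r hr
    rw [show r + 12 * (k + 1) = (r + 12 * k) + 12 from by omega,
      vec_add12 _ (by omega), ih r hr]


/-- `Z(C_{m,6})` is periodic in `m` with period 12, and for
`m ≡ 1, 2, 3, 4, 5, 6, 7, 8, 9, 10, 11, 0 (mod 12)` its value is respectively
2, −1, 1, 4, −1, −1, 4, 1, −1, 2, 1, 1. -/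
theorem Zcyl_six :
    (∀ m : ℕ, 1 ≤ m → Zcyl (m + 12) 6 = Zcyl m 6) ∧
    (∀ m : ℕ, 1 ≤ m →
      (m % 12 = 1 → Zcyl m 6 = 2) ∧
      (m % 12 = 2 → Zcyl m 6 = -1) ∧
      (m % 12 = 3 → Zcyl m 6 = 1) ∧
      (m % 12 = 4 → Zcyl m 6 = 4) ∧
      (m % 12 = 5 → Zcyl m 6 = -1) ∧
      (m % 12 = 6 → Zcyl m 6 = -1) ∧
      (m % 12 = 7 → Zcyl m 6 = 4) ∧
      (m % 12 = 8 → Zcyl m 6 = 1) ∧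
      (m % 12 = 9 → Zcyl m 6 = -1) ∧
      (m % 12 = 10 → Zcyl m 6 = 2) ∧
      (m % 12 = 11 → Zcyl m 6 = 1) ∧
      (m % 12 = 0 → Zcyl m 6 = 1)) := by
  constructor
  · intro m hm
    rw [Zcyl_eq_vec, Zcyl_eq_vec, vec_add12 m hm]
  · intro m hm
    have h1 : m % 12 = 1 → Zcyl m 6 = (2 : ℤ) := by
      intro h
      obtain ⟨k, rfl⟩ : ∃ k, m = 1 + 12 * k := ⟨m / 12, by omega⟩
      rw [Zcyl_eq_vec, vec_rep k 1 (by norm_num)]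
      exact z1
    have h2 : m % 12 = 2 → Zcyl m 6 = (-1 : ℤ) := by
      intro h
      obtain ⟨k, rfl⟩ : ∃ k, m = 2 + 12 * k := ⟨m / 12, by omega⟩
      rw [Zcyl_eq_vec, vec_rep k 2 (by norm_num)]
      exact z2
    have h3 : m % 12 = 3 → Zcyl m 6 = (1 : ℤ) := by
      intro h
      obtain ⟨k, rfl⟩ : ∃ k, m = 3 + 12 * k := ⟨m / 12, by omega⟩
      rw [Zcyl_eq_vec, vec_rep k 3 (by norm_num)]
      exact z3
    have h4 : m % 12 = 4 → Zcyl m 6 = (4 : ℤ) := by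
      intro h
      obtain ⟨k, rfl⟩ : ∃ k, m = 4 + 12 * k := ⟨m / 12, by omega⟩
      rw [Zcyl_eq_vec, vec_rep k 4 (by norm_num)]
      exact z4
    have h5 : m % 12 = 5 → Zcyl m 6 = (-1 : ℤ) := by
      intro h
      obtain ⟨k, rfl⟩ : ∃ k, m = 5 + 12 * k := ⟨m / 12, by omega⟩
      rw [Zcyl_eq_vec, vec_rep k 5 (by norm_num)]
      exact z5
    have h6 : m % 12 = 6 → Zcyl m 6 = (-1 : ℤ) := by
      intro h
      obtain ⟨k, rfl⟩ : ∃ k, m = 6 + 12 * k := ⟨m / 12, by omega⟩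
      rw [Zcyl_eq_vec, vec_rep k 6 (by norm_num)]
      exact z6
    have h7 : m % 12 = 7 → Zcyl m 6 = (4 : ℤ) := by
      intro h
      obtain ⟨k, rfl⟩ : ∃ k, m = 7 + 12 * k := ⟨m / 12, by omega⟩
      rw [Zcyl_eq_vec, vec_rep k 7 (by norm_num)]
      exact z7
    have h8 : m % 12 = 8 → Zcyl m 6 = (1 : ℤ) := by
      intro h
      obtain ⟨k, rfl⟩ : ∃ k, m = 8 + 12 * k := ⟨m / 12, by omega⟩
      rw [Zcyl_eq_vec, vec_rep k 8 (by norm_num)]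
      exact z8
    have h9 : m % 12 = 9 → Zcyl m 6 = (-1 : ℤ) := by
      intro h
      obtain ⟨k, rfl⟩ : ∃ k, m = 9 + 12 * k := ⟨m / 12, by omega⟩
      rw [Zcyl_eq_vec, vec_rep k 9 (by norm_num)]
      exact z9
    have h10 : m % 12 = 10 → Zcyl m 6 = (2 : ℤ) := by
      intro h
      obtain ⟨k, rfl⟩ : ∃ k, m = 10 + 12 * k := ⟨m / 12, by omega⟩
      rw [Zcyl_eq_vec, vec_rep k 10 (by norm_num)]
      exact z10
    have h11 : m % 12 = 11 → Zcyl m 6 = (1 : ℤ) := by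
      intro h
      obtain ⟨k, rfl⟩ : ∃ k, m = 11 + 12 * k := ⟨m / 12, by omega⟩
      rw [Zcyl_eq_vec, vec_rep k 11 (by norm_num)]
      exact z11
    have h12 : m % 12 = 0 → Zcyl m 6 = (1 : ℤ) := by
      intro h
      obtain ⟨k, rfl⟩ : ∃ k, m = 12 + 12 * k := ⟨m / 12 - 1, by omega⟩
      rw [Zcyl_eq_vec, vec_rep k 12 (by norm_num)]
      exact z12
    exact ⟨h1, h2, h3, h4, h5, h6, h7, h8, h9, h10, h11, h12⟩
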